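/- The rules induced by the closure coincide with the original rules: (P↓↑)↓ = P↓, for any set P of paths each with at least 3 nodes. -/

import Mathlib

/-- The set of switch rules induced by a set of paths:
`(a,b,c) ∈ Rules P` iff some path of `P` contains the consecutive triple `a,b,c`. -/
def Rules {V : Type*} (P : Set (List V)) : Set (V × V × V) :=
  {r | ∃ α β : List V, α ++ [r.1, r.2.1, r.2.2] ++ β ∈ P}

/-- `P↓↑`: the set of paths (with at least 3 nodes) all of whose consecutive
triples are rules of `P`, and whose first and last arcs occur as the first/last
arcs of some paths of `P`. -/
def Closure {V : Type*} (P : Set (List V)) : Set (List V) :=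
  {l | 3 ≤ l.length ∧
    (∀ (α β : List V) (a b c : V), l = α ++ [a, b, c] ++ β → (a, b, c) ∈ Rules P) ∧
    (∃ x y : V, (∃ r : List V, l = x :: y :: r) ∧ ∃ p ∈ P, ∃ r : List V, p = x :: y :: r) ∧
    (∃ x y : V, (∃ r : List V, l = r ++ [x, y]) ∧ ∃ p ∈ P, ∃ r : List V, p = r ++ [x, y])}

/-- A set of paths is arc closed if it satisfies the exchange property for common arcs. -/
def ArcClosed {V : Type*} (P : Set (List V)) : Prop :=
  ∀ (α α' β β' : List V) (x y : V),
    α ++ [x, y] ++ β ∈ P → α' ++ [x, y] ++ β' ∈ P → α ++ [x, y] ++ β' ∈ P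

/-- A path is edge simple if its consecutive arcs are pairwise distinct. -/
def EdgeSimple {V : Type*} (l : List V) : Prop := (l.zip l.tail).Nodup


namespace List

variable {α : Type*}

theorem exists_eq_cons_cons_of_two_le_length {l : List α} (hl : 2 ≤ l.length) :
    ∃ x y r, l = x :: y :: r := by
  match l, hl with
  | x :: y :: r, _ => exact ⟨x, y, r, rfl⟩

theorem exists_eq_append_pair_of_two_le_length {l : List α} (hl : 2 ≤ l.length) :
    ∃ x y r, l = r ++ [x, y] := by
  obtain ⟨y, x, r, hr⟩ := exists_eq_cons_cons_of_two_le_length (l := l.reverse) (by simpa using hl)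
  exact ⟨x, y, r.reverse, by simpa using congrArg reverse hr⟩

end List

section Rules

variable {V : Type*} {P : Set (List V)}

theorem rules_closure_subset : Rules (Closure P) ⊆ Rules P :=
  fun r ⟨α, β, hl⟩ => hl.2.1 α β r.1 r.2.1 r.2.2 rfl

theorem mem_closure_of_mem {p : List V} (hp : p ∈ P) (hlen : 3 ≤ p.length) : p ∈ Closure P := by
  refine ⟨hlen, fun α β a b c h => ⟨α, β, h ▸ hp⟩, ?_, ?_⟩
  · obtain ⟨x, y, r, hr⟩ := List.exists_eq_cons_cons_of_two_le_length (by omega : 2 ≤ p.length)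
    exact ⟨x, y, ⟨r, hr⟩, p, hp, r, hr⟩
  · obtain ⟨x, y, r, hr⟩ := List.exists_eq_append_pair_of_two_le_length (by omega : 2 ≤ p.length)
    exact ⟨x, y, ⟨r, hr⟩, p, hp, r, hr⟩

theorem rules_subset_rules_closure : Rules P ⊆ Rules (Closure P) := by
  rintro r ⟨α, β, hp⟩
  refine ⟨α, β, mem_closure_of_mem hp ?_⟩
  simp only [List.length_append, List.length_cons, List.length_nil]
  omega

end Rules

theorem stmt11_general {V : Type*} (P : Set (List V)) :
    Rules (Closure P) = Rules P :=
  rules_closure_subset.antisymm rules_subset_rules_closure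

theorem stmt11 {V : Type*} (P : Set (List V)) (hlen : ∀ p ∈ P, 3 ≤ p.length) :
    Rules (Closure P) = Rules P :=
  stmt11_general P
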